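/- Let K be a commutative field with at least 4 elements, and let μ : K² → K² be an isometry of the affine part of the Cayley surface; that is, for all X = (u₁,u₂) and Y = (v₁,v₂) in K²: u₁ = v₁ if and only if the first coordinates of μ(X) and μ(Y) agree, and whenever u₁ ≠ v₁ one has δ(μ(X), μ(Y)) = δ(X, Y). Then there exists a unique triple (a,b,c) ∈ K × K × (K \ {0}) such that μ(x₁,x₂) = (a + c·x₁, b + 3ac·x₁ + c²·x₂) for all (x₁,x₂) ∈ K². In particular, μ is bijective and is induced by a unique matrix M_{a,b,c} of the group G(F), hence extends to a unique projective collineation of ℙ₃(K) fixing the Cayley surface. -/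

import Mathlib

/-- The (non-symmetric) distance function on the affine part of the Cayley
surface, in the parameters `(u₁,u₂)`. -/
def cayleyDist {K : Type*} [Field K] (A B : K × K) : K :=
  (2*A.1^2 - A.2 - A.1*B.1 + B.2 - B.1^2) / (A.1 - B.1)^2

/-- The action of the matrix `M_{a,b,c}` on the affine part of the Cayley
surface, in the parameters `(x₁,x₂)`. -/
def cayleyT {K : Type*} [Field K] (a b c : K) (x : K × K) : K × K :=
  (a + c * x.1, b + 3*a*c*x.1 + c^2*x.2)

theorem stmt_19 {K : Type*} [Field K] (hK : (4 : Cardinal) ≤ Cardinal.mk K)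
    (μ : K × K → K × K)
    (hpar : ∀ X Y : K × K, X.1 = Y.1 ↔ (μ X).1 = (μ Y).1)
    (hiso : ∀ X Y : K × K, X.1 ≠ Y.1 → cayleyDist (μ X) (μ Y) = cayleyDist X Y) :
    (∃! abc : K × K × K, abc.2.2 ≠ 0 ∧
        ∀ x : K × K, μ x = cayleyT abc.1 abc.2.1 abc.2.2 x) ∧
    Function.Bijective μ := by
  classical
  set g : K → K := fun u => (μ (u, 0)).1 with hgdef
  have hg1 : ∀ u p : K, (μ (u, p)).1 = g u := fun u p => (hpar (u,p) (u,0)).mp rfl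
  have ginj : ∀ u v : K, g u = g v → u = v := fun u v h => (hpar (u,0) (v,0)).mpr h
  have hgne : g 1 ≠ g 0 := fun h => one_ne_zero (ginj 1 0 h)
  have hcne : g 1 - g 0 ≠ 0 := sub_ne_zero.mpr hgne
  -- cross-multiplied isometry equation
  have key : ∀ u v p q : K, u ≠ v →
      (2*(g u)^2 - (μ (u,p)).2 - g u * g v + (μ (v,q)).2 - (g v)^2) * (u - v)^2
      = (2*u^2 - p - u*v + q - v^2) * (g u - g v)^2 := by
    intro u v p q huv
    have h1 := hiso (u,p) (v,q) huv
    have hguv : g u ≠ g v := fun h => huv (ginj u v h)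
    have h2 : (u - v) ≠ 0 := sub_ne_zero.mpr huv
    have h3 : (g u - g v) ≠ 0 := sub_ne_zero.mpr hguv
    simp only [cayleyDist, hg1] at h1
    rw [div_eq_div_iff (pow_ne_zero 2 h3) (pow_ne_zero 2 h2)] at h1
    linear_combination h1
  have stepB : ∀ u v p p' : K, u ≠ v →
      ((μ (u,p)).2 - (μ (u,p')).2) * (u-v)^2 = (p - p') * (g u - g v)^2 := by
    intro u v p p' huv
    have k1 := key u v p 0 huv
    have k2 := key u v p' 0 huv
    linear_combination k2 - k1
  have eC : ∀ u v : K, u ≠ v →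
      (g u - g v)^2 = ((μ (u,1)).2 - (μ (u,0)).2) * (u-v)^2 := by
    intro u v huv
    linear_combination -(stepB u v 1 0 huv)
  have econst : ∀ u v : K, u ≠ v →
      (μ (u,1)).2 - (μ (u,0)).2 = (μ (v,1)).2 - (μ (v,0)).2 := by
    intro u v huv
    have h1 := eC u v huv
    have h2 := eC v u huv.symm
    have hd : (u - v)^2 ≠ 0 := pow_ne_zero _ (sub_ne_zero.mpr huv)
    have h3 : ((μ (u,1)).2 - (μ (u,0)).2) * (u-v)^2
        = ((μ (v,1)).2 - (μ (v,0)).2) * (u-v)^2 := by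
      linear_combination h2 - h1
    exact mul_right_cancel₀ hd h3
  have econst' : ∀ u : K, (μ (u,1)).2 - (μ (u,0)).2 = (μ ((1:K),1)).2 - (μ ((1:K),0)).2 := by
    intro u
    rcases eq_or_ne u 1 with rfl | h
    · rfl
    · exact econst u 1 h
  have stepC : ∀ u v : K, (g u - g v)^2 = (g 1 - g 0)^2 * (u - v)^2 := by
    intro u v
    rcases eq_or_ne u v with rfl | huv
    · ring
    · have h1 := eC u v huv
      have h2 := eC 1 0 one_ne_zero
      rw [econst' u] at h1
      rw [h1, h2]; ring
  have stepD : ∀ u : K, g u = g 0 + (g 1 - g 0) * u := by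
    intro u
    have h0 := stepC u 0
    have hfac : (g u - g 0 - (g 1 - g 0) * u) * (g u - g 0 + (g 1 - g 0) * u) = 0 := by
      linear_combination h0
    rcases mul_eq_zero.mp hfac with h | h
    · linear_combination h
    · rcases eq_or_ne (2:K) 0 with h2 | h2
      · linear_combination h - (g 1 - g 0)*u*h2
      · rcases eq_or_ne u 0 with rfl | hu0
        · linear_combination h
        · exfalso
          rcases eq_or_ne u 1 with rfl | hu1
          · have h6 : (2:K) * (g 1 - g 0) = 0 := by linear_combination h
            exact hgne (sub_eq_zero.mp ((mul_eq_zero.mp h6).resolve_left h2))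
          · have hgu : g u = g 0 - (g 1 - g 0) * u := by linear_combination h
            have hs := stepC u 1
            rw [hgu] at hs
            have h5 : (g 1 - g 0)^2 * (2*(2*u)) = (g 1 - g 0)^2 * (2*(2*(0:K))) := by
              linear_combination hs
            have h6 := mul_left_cancel₀ (pow_ne_zero 2 hcne) h5
            have h7 := mul_left_cancel₀ h2 h6
            exact hu0 (mul_left_cancel₀ h2 h7)
  have stepE : ∀ u p : K, (μ (u,p)).2 = (μ (u,0)).2 + (g 1 - g 0)^2 * p := by
    intro u p
    obtain ⟨v, hv⟩ := exists_ne u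
    have huv : u ≠ v := hv.symm
    have hB := stepB u v p 0 huv
    rw [stepC u v] at hB
    have hd : (u-v)^2 ≠ 0 := pow_ne_zero _ (sub_ne_zero.mpr huv)
    have h3 : ((μ (u,p)).2) * (u-v)^2
        = ((μ (u,0)).2 + (g 1 - g 0)^2 * p) * (u-v)^2 := by
      linear_combination hB
    exact mul_right_cancel₀ hd h3
  have stepF : ∀ u : K, (μ (u,0)).2 = (μ ((0:K),0)).2 + 3 * (g 0) * (g 1 - g 0) * u := by
    intro u
    rcases eq_or_ne u 0 with rfl | hu
    · ring
    · have hk := key u 0 0 0 hu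
      rw [stepD u] at hk
      have hd : (u:K)^2 ≠ 0 := pow_ne_zero _ hu
      have h3 : ((μ (u,0)).2) * u^2
          = ((μ ((0:K),0)).2 + 3 * (g 0) * (g 1 - g 0) * u) * u^2 := by
        linear_combination -hk
      exact mul_right_cancel₀ hd h3
  -- the explicit form of μ
  set a := g 0 with ha
  set b := (μ ((0:K),(0:K))).2 with hb
  set c := g 1 - g 0 with hc
  have hform : ∀ x : K × K, μ x = cayleyT a b c x := by
    rintro ⟨u, p⟩
    have h1 : (μ (u,p)).1 = a + c * u := by rw [hg1 u p, stepD u]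
    have h2 : (μ (u,p)).2 = b + 3*a*c*u + c^2*p := by
      linear_combination stepE u p + stepF u
    exact Prod.ext h1 h2
  constructor
  · refine ⟨(a, b, c), ⟨hcne, hform⟩, ?_⟩
    rintro ⟨a', b', c'⟩ ⟨hc', hform'⟩
    have h00 := (hform' (0,0)).symm.trans (hform (0,0))
    have h10 := (hform' (1,0)).symm.trans (hform (1,0))
    simp only [cayleyT, Prod.mk.injEq] at h00 h10
    obtain ⟨ha', hb'⟩ := h00
    obtain ⟨hc0, -⟩ := h10
    have ha2 : a' = a := by linear_combination ha'
    have hb2 : b' = b := by linear_combination hb'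
    have hc2 : c' = c := by linear_combination hc0 - ha'
    simp [ha2, hb2, hc2]
  · apply Function.bijective_iff_has_inverse.mpr
    refine ⟨fun y => ((y.1 - a)/c, (y.2 - b - 3*a*(y.1 - a))/c^2), ?_, ?_⟩
    · rintro ⟨u, p⟩
      rw [hform (u,p)]
      simp only [cayleyT, Prod.mk.injEq]
      constructor
      · field_simp; ring
      · field_simp; ring
    · rintro ⟨y1, y2⟩
      rw [hform _]
      simp only [cayleyT, Prod.mk.injEq]
      constructor
      · field_simp; ring
      · field_simp; ring
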